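/- For n ≥ 2, the map (a,b) ↦ X_{(a,b)} given by the formulas of Theorem 3.7 is injective on the set of indecomposable rigid objects {(a,b) : 1 ≤ a ≤ n, 1 ≤ b ≤ n-1} of the cluster tube C_n, where a is taken modulo n; i.e., distinct pairs (a,b) ≠ (a',b') in [1,n]×[1,n-1] give distinct rational functions X_{(a,b)} ≠ X_{(a',b')} in ℚ(x₁,…,x_{n-1}). -/
import Mathlib


open Finset

/-- The field ℚ(x₁, …, x_{n-1}). -/
abbrev RF : Type := FractionRing (MvPolynomial ℕ ℚ)

/-- The variables x₁, …, x_{n-1}, with the convention x_m = 1 for m ≥ n. -/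
noncomputable def x (n m : ℕ) : RF :=
  if 1 ≤ m ∧ m ≤ n - 1 then algebraMap (MvPolynomial ℕ ℚ) RF (MvPolynomial.X m) else 1

/-- The cluster character X_{(a,b)} of Theorem 3.7, defined case-by-case according to
whether (a,b) lies in region O (a = 1), region I (2 ≤ a ≤ n-1, a+b ≤ n), or
region II (a+b ≥ n+1, b ≤ n-1). -/
noncomputable def Xab (n a b : ℕ) : RF :=
  if a = 1 then x n (n - b)
  else if a + b ≤ n then
    ∑ k ∈ range (b + 1),
      x n (n - a - b + 1) * x n (n - a + 2) / (x n (n - a - k + 1) * x n (n - a - k + 2))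
  else
    x n 1 * x n (n - a + 2) * x n (2 * n - a - b + 1) *
      (1 / x n 1 ^ 2 +
        (∑ k ∈ range (n - a + 1), 1 / (x n (n - a - k + 1) * x n (n - a - k + 2))) *
        (∑ l ∈ range (2 * n - a - b),
          1 / (x n (2 * n - a - b - l) * x n (2 * n - a - b - l + 1))))

namespace ClusterAux
open MvPolynomial
noncomputable def pX (n i : ℕ) : MvPolynomial ℕ ℚ :=
  if 1 ≤ i ∧ i ≤ n - 1 then X i else 1
noncomputable def Pp (n : ℕ) : MvPolynomial ℕ ℚ := ∏ j ∈ Icc 1 (n-1), X j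
noncomputable def Dp (n i : ℕ) : MvPolynomial ℕ ℚ :=
  if 1 ≤ i ∧ i ≤ n - 1 then ∏ j ∈ (Icc 1 (n-1)).erase i, X j else Pp n
lemma x_eq (n i : ℕ) : x n i = algebraMap (MvPolynomial ℕ ℚ) RF (pX n i) := by
  unfold x pX; split <;> simp
lemma amap_ne (p : MvPolynomial ℕ ℚ) (hp : p ≠ 0) :
    algebraMap (MvPolynomial ℕ ℚ) RF p ≠ 0 := by
  simpa [IsFractionRing.to_map_eq_zero_iff] using hp
lemma x_ne (n i : ℕ) : x n i ≠ 0 := by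
  unfold x; split
  · exact amap_ne _ (X_ne_zero i)
  · exact one_ne_zero
lemma D_mul_pX (n i : ℕ) : Dp n i * pX n i = Pp n := by
  unfold Dp pX Pp
  split
  · rename_i h
    exact Finset.prod_erase_mul _ _ (by simp [Finset.mem_Icc, h.1, h.2])
  · exact mul_one _

-- NEW PART
noncomputable def Pm (n a b : ℕ) : MvPolynomial ℕ ℚ :=
  if a = 1 then pX n (n - b) * Pp n ^ 4
  else if a + b ≤ n then
    ∑ k ∈ range (b + 1),
      pX n (n-a-b+1) * pX n (n-a+2) * (Dp n (n-a-k+1) * Dp n (n-a-k+2)) * Pp n ^ 2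
  else
    pX n 1 * pX n (n-a+2) * pX n (2*n-a-b+1) * (Dp n 1 * Dp n 1) * Pp n ^ 2
    + ∑ k ∈ range (n-a+1), ∑ l ∈ range (2*n-a-b),
        pX n 1 * pX n (n-a+2) * pX n (2*n-a-b+1) *
          (Dp n (n-a-k+1) * Dp n (n-a-k+2) * (Dp n (2*n-a-b-l) * Dp n (2*n-a-b-l+1)))

local notation "am" => algebraMap (MvPolynomial ℕ ℚ) RF

lemma termI (n A B i j : ℕ) :
    x n A * x n B / (x n i * x n j) * am (Pp n ^ 4)
      = am (pX n A * pX n B * (Dp n i * Dp n j) * Pp n ^ 2) := by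
  rw [div_mul_eq_mul_div, div_eq_iff (mul_ne_zero (x_ne n i) (x_ne n j)),
    x_eq n A, x_eq n B, x_eq n i, x_eq n j, ← map_mul, ← map_mul, ← map_mul, ← map_mul]
  congr 1
  have h1 := D_mul_pX n i
  have h2 := D_mul_pX n j
  linear_combination (-(pX n A * pX n B * Pp n ^ 2 * Dp n j * pX n j)) * h1
    - (pX n A * pX n B * Pp n ^ 3) * h2

lemma termII0 (n B C : ℕ) :
    x n 1 * x n B * x n C * (1 / x n 1 ^ 2) * am (Pp n ^ 4)
      = am (pX n 1 * pX n B * pX n C * (Dp n 1 * Dp n 1) * Pp n ^ 2) := by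
  have h2 : x n 1 ^ 2 ≠ 0 := pow_ne_zero 2 (x_ne n 1)
  apply mul_right_cancel₀ h2
  rw [show x n 1 * x n B * x n C * (1 / x n 1 ^ 2) * am (Pp n ^ 4) * x n 1 ^ 2
      = x n 1 * x n B * x n C * am (Pp n ^ 4) * (1 / x n 1 ^ 2 * x n 1 ^ 2) from by ring,
    one_div_mul_cancel h2, mul_one]
  rw [x_eq n 1, x_eq n B, x_eq n C]
  simp only [← map_mul, ← map_pow]
  congr 1
  have h1 := D_mul_pX n 1
  linear_combination (-(pX n 1 * pX n B * pX n C * Pp n ^ 2 * Dp n 1 * pX n 1)) * h1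
    - (pX n 1 * pX n B * pX n C * Pp n ^ 3) * h1

lemma termII4 (n B C i j u w : ℕ) :
    x n 1 * x n B * x n C * (1 / (x n i * x n j) * (1 / (x n u * x n w))) * am (Pp n ^ 4)
      = am (pX n 1 * pX n B * pX n C * (Dp n i * Dp n j * (Dp n u * Dp n w))) := by
  have hne : (x n i * x n j) * (x n u * x n w) ≠ 0 :=
    mul_ne_zero (mul_ne_zero (x_ne n i) (x_ne n j)) (mul_ne_zero (x_ne n u) (x_ne n w))
  have hij : x n i * x n j ≠ 0 := mul_ne_zero (x_ne n i) (x_ne n j)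
  have huw : x n u * x n w ≠ 0 := mul_ne_zero (x_ne n u) (x_ne n w)
  apply mul_right_cancel₀ hne
  rw [show x n 1 * x n B * x n C * (1 / (x n i * x n j) * (1 / (x n u * x n w))) * am (Pp n ^ 4)
        * (x n i * x n j * (x n u * x n w))
      = x n 1 * x n B * x n C * am (Pp n ^ 4)
        * (1 / (x n i * x n j) * (x n i * x n j)) * (1 / (x n u * x n w) * (x n u * x n w)) from by
      ring,
    one_div_mul_cancel hij, one_div_mul_cancel huw, mul_one, mul_one]
  rw [x_eq n 1, x_eq n B, x_eq n C, x_eq n i, x_eq n j, x_eq n u, x_eq n w]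
  simp only [← map_mul, ← map_pow]
  congr 1
  have hi := D_mul_pX n i
  have hj := D_mul_pX n j
  have hu := D_mul_pX n u
  have hw := D_mul_pX n w
  linear_combination (-(pX n 1 * pX n B * pX n C * Dp n j * pX n j * Dp n u * pX n u * Dp n w * pX n w)) * hi
    - (pX n 1 * pX n B * pX n C * Pp n * Dp n u * pX n u * Dp n w * pX n w) * hj
    - (pX n 1 * pX n B * pX n C * Pp n ^ 2 * Dp n w * pX n w) * hu
    - (pX n 1 * pX n B * pX n C * Pp n ^ 3) * hw

lemma clear (n a b : ℕ) :
    Xab n a b * am (Pp n ^ 4) = am (Pm n a b) := by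
  unfold Xab Pm
  split
  · rw [x_eq, ← map_mul]
  · split
    · rw [Finset.sum_mul, map_sum]
      exact Finset.sum_congr rfl fun k _ => termI n _ _ _ _
    · rw [mul_add, add_mul, map_add]
      congr 1
      · exact termII0 n _ _
      · rw [Finset.sum_mul_sum, Finset.mul_sum, Finset.sum_mul, map_sum]
        refine Finset.sum_congr rfl fun k _ => ?_
        rw [Finset.mul_sum, Finset.sum_mul, map_sum]
        exact Finset.sum_congr rfl fun l _ => termII4 n _ _ _ _ _ _


noncomputable def nu (m : ℕ) (P : MvPolynomial ℕ ℚ) : ℕ∞ :=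
  P.support.inf fun d => (d m : ℕ∞)

lemma nu_monomial (m : ℕ) (e : ℕ →₀ ℕ) : nu m (monomial e (1 : ℚ)) = e m := by
  unfold nu
  rw [support_monomial, if_neg one_ne_zero]
  simp

def NN (P : MvPolynomial ℕ ℚ) : Prop := ∀ d, 0 ≤ coeff d P

lemma NN_monomial (e : ℕ →₀ ℕ) : NN (monomial e (1 : ℚ)) := by
  intro d
  rw [coeff_monomial]
  split <;> norm_num

lemma support_add_eq {P Q : MvPolynomial ℕ ℚ} (hP : NN P) (hQ : NN Q) :
    (P + Q).support = P.support ∪ Q.support := by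
  ext d
  simp only [mem_support_iff, Finset.mem_union, coeff_add]
  constructor
  · intro h
    by_contra hc
    push_neg at hc
    simp [hc.1, hc.2] at h
  · intro h hc
    rcases (add_eq_zero_iff_of_nonneg (hP d) (hQ d)).mp hc with ⟨h1, h2⟩
    tauto

lemma NN_add {P Q : MvPolynomial ℕ ℚ} (hP : NN P) (hQ : NN Q) : NN (P + Q) := by
  intro d; rw [coeff_add]; exact add_nonneg (hP d) (hQ d)

lemma nu_add {m : ℕ} {P Q : MvPolynomial ℕ ℚ} (hP : NN P) (hQ : NN Q) :
    nu m (P + Q) = nu m P ⊓ nu m Q := by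
  unfold nu
  rw [support_add_eq hP hQ, Finset.inf_union]

lemma NN_sum {α : Type*} (s : Finset α) (f : α → MvPolynomial ℕ ℚ)
    (h : ∀ k ∈ s, NN (f k)) : NN (∑ k ∈ s, f k) := by
  induction s using Finset.cons_induction with
  | empty => intro d; simp
  | cons a s ha ih =>
      rw [Finset.sum_cons]
      exact NN_add (h a (Finset.mem_cons_self a s))
        (ih fun k hk => h k (Finset.mem_cons_of_mem hk))

lemma nu_sum {α : Type*} (m : ℕ) (s : Finset α) (f : α → MvPolynomial ℕ ℚ)
    (h : ∀ k ∈ s, NN (f k)) :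
    nu m (∑ k ∈ s, f k) = s.inf fun k => nu m (f k) := by
  induction s using Finset.cons_induction with
  | empty => simp [nu]
  | cons a s ha ih =>
      rw [Finset.sum_cons, Finset.inf_cons,
        nu_add (h a (Finset.mem_cons_self a s))
          (NN_sum s f fun k hk => h k (Finset.mem_cons_of_mem hk)),
        ih fun k hk => h k (Finset.mem_cons_of_mem hk)]

lemma prod_X_monomial (s : Finset ℕ) :
    (∏ j ∈ s, (X j : MvPolynomial ℕ ℚ)) = monomial (∑ j ∈ s, Finsupp.single j 1) 1 := by
  induction s using Finset.cons_induction with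
  | empty => simp
  | cons a s ha ih =>
      rw [Finset.prod_cons, Finset.sum_cons, ih, ← pow_one (X a : MvPolynomial ℕ ℚ),
        X_pow_eq_monomial, monomial_mul, one_mul]

noncomputable def eX (n i : ℕ) : ℕ →₀ ℕ :=
  if 1 ≤ i ∧ i ≤ n - 1 then Finsupp.single i 1 else 0
noncomputable def eP (n : ℕ) : ℕ →₀ ℕ := ∑ j ∈ Icc 1 (n-1), Finsupp.single j 1
noncomputable def eD (n i : ℕ) : ℕ →₀ ℕ :=
  if 1 ≤ i ∧ i ≤ n - 1 then ∑ j ∈ (Icc 1 (n-1)).erase i, Finsupp.single j 1 else eP n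

lemma eX_apply {n m : ℕ} (hm1 : 1 ≤ m) (hm2 : m ≤ n - 1) (i : ℕ) :
    eX n i m = if i = m then 1 else 0 := by
  unfold eX
  split
  · exact Finsupp.single_apply
  · rename_i h
    rw [if_neg (by rintro rfl; exact h ⟨hm1, hm2⟩), Finsupp.coe_zero, Pi.zero_apply]

lemma eP_apply {n m : ℕ} (hm1 : 1 ≤ m) (hm2 : m ≤ n - 1) : eP n m = 1 := by
  unfold eP
  rw [Finsupp.finset_sum_apply]
  simp only [Finsupp.single_apply]
  rw [Finset.sum_ite_eq' (Icc 1 (n-1)) m (fun _ => 1), if_pos (by simp [Finset.mem_Icc, hm1, hm2])]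

lemma eD_apply {n m : ℕ} (hm1 : 1 ≤ m) (hm2 : m ≤ n - 1) (i : ℕ) :
    eD n i m = if i = m then 0 else 1 := by
  unfold eD
  split
  · rename_i h
    rw [Finsupp.finset_sum_apply]
    simp only [Finsupp.single_apply]
    rw [Finset.sum_ite_eq' _ m (fun _ => 1)]
    by_cases hi : i = m
    · rw [if_pos hi, if_neg (by simp [hi])]
    · rw [if_pos (by simp [Finset.mem_erase, Finset.mem_Icc, hm1, hm2, Ne.symm hi]), if_neg hi]
  · rename_i h
    rw [if_neg (by rintro rfl; exact h ⟨hm1, hm2⟩)]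
    exact eP_apply hm1 hm2

lemma pX_m (n i : ℕ) : pX n i = monomial (eX n i) 1 := by
  unfold pX eX
  split
  · rw [← pow_one (X i : MvPolynomial ℕ ℚ), X_pow_eq_monomial]
  · simp

lemma Pp_m (n : ℕ) : Pp n = monomial (eP n) 1 := prod_X_monomial _

lemma Dp_m (n i : ℕ) : Dp n i = monomial (eD n i) 1 := by
  unfold Dp eD
  split
  · exact prod_X_monomial _
  · exact Pp_m n

lemma tO_m (n b : ℕ) : pX n (n - b) * Pp n ^ 4 = monomial (eX n (n - b) + 4 • eP n) 1 := by
  simp only [pX_m, Pp_m, monomial_pow, monomial_mul, one_pow, one_mul, mul_one]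

lemma tI_m (n A B i j : ℕ) :
    pX n A * pX n B * (Dp n i * Dp n j) * Pp n ^ 2
      = monomial (eX n A + eX n B + (eD n i + eD n j) + 2 • eP n) 1 := by
  simp only [pX_m, Dp_m, Pp_m, monomial_pow, monomial_mul, one_pow, one_mul, mul_one]

lemma tII0_m (n B C : ℕ) :
    pX n 1 * pX n B * pX n C * (Dp n 1 * Dp n 1) * Pp n ^ 2
      = monomial (eX n 1 + eX n B + eX n C + (eD n 1 + eD n 1) + 2 • eP n) 1 := by
  simp only [pX_m, Dp_m, Pp_m, monomial_pow, monomial_mul, one_pow, one_mul, mul_one]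

lemma tII4_m (n B C i j u w : ℕ) :
    pX n 1 * pX n B * pX n C * (Dp n i * Dp n j * (Dp n u * Dp n w))
      = monomial (eX n 1 + eX n B + eX n C + (eD n i + eD n j + (eD n u + eD n w))) 1 := by
  simp only [pX_m, Dp_m, monomial_mul, one_mul, mul_one]


lemma nuO (n b m : ℕ) (hm1 : 1 ≤ m) (hm2 : m ≤ n - 1) :
    nu m (Pm n 1 b) = ((if n - b = m then 5 else 4 : ℕ) : ℕ∞) := by
  unfold Pm
  rw [if_pos rfl, tO_m, nu_monomial]
  rw [Finsupp.add_apply, Finsupp.smul_apply, eX_apply hm1 hm2, eP_apply hm1 hm2, smul_eq_mul]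
  split_ifs <;> norm_num

lemma nuI (n a b m : ℕ) (hm1 : 1 ≤ m) (hm2 : m ≤ n - 1) (ha : 2 ≤ a) (hab : a + b ≤ n)
    (hb : 1 ≤ b) :
    nu m (Pm n a b) = ((if n-a-b+2 ≤ m ∧ m ≤ n-a+1 then 3 else 4 : ℕ) : ℕ∞) := by
  unfold Pm
  rw [if_neg (by omega), if_pos hab,
    nu_sum m _ _ (fun k _ => by rw [tI_m]; exact NN_monomial _)]
  have hval : ∀ k : ℕ,
      nu m (pX n (n-a-b+1) * pX n (n-a+2) * (Dp n (n-a-k+1) * Dp n (n-a-k+2)) * Pp n ^ 2)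
      = (((if n-a-b+1 = m then 1 else 0) + (if n-a+2 = m then 1 else 0)
         + ((if n-a-k+1 = m then 0 else 1) + (if n-a-k+2 = m then 0 else 1)) + 2 : ℕ) : ℕ∞) := by
    intro k
    rw [tI_m, nu_monomial]
    simp only [Finsupp.add_apply, Finsupp.smul_apply, eX_apply hm1 hm2, eD_apply hm1 hm2,
      eP_apply hm1 hm2, smul_eq_mul, mul_one]
  apply le_antisymm
  · by_cases hc : n-a-b+2 ≤ m ∧ m ≤ n-a+1
    · have hmem : n-a+1-m ∈ range (b+1) := by rw [Finset.mem_range]; omega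
      refine le_trans (Finset.inf_le hmem) ?_
      rw [hval]
      exact Nat.cast_le.mpr (by split_ifs <;> omega)
    · have hw : (if n-a+2 ≤ m then 0 else b) ∈ range (b+1) := by
        rw [Finset.mem_range]; split_ifs <;> omega
      refine le_trans (Finset.inf_le hw) ?_
      rw [hval]
      exact Nat.cast_le.mpr (by split_ifs <;> omega)
  · refine Finset.le_inf fun k hk => ?_
    rw [hval]
    have hk' := Finset.mem_range.mp hk
    exact Nat.cast_le.mpr (by split_ifs <;> omega)

set_option maxHeartbeats 4000000 in
lemma nuII (n a b m : ℕ) (hm1 : 1 ≤ m) (hm2 : m ≤ n - 1) (ha : 2 ≤ a) (han : a ≤ n)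
    (hab : n + 1 ≤ a + b) (hb : b ≤ n - 1) (hn : 2 ≤ n) :
    nu m (Pm n a b) = ((if m = 1 then 3 else if m ≤ n-a+1 then 2
      else if m = n-a+2 ∧ b = n-1 then 4 else if m ≤ 2*n-a-b then 3 else 4 : ℕ) : ℕ∞) := by
  unfold Pm
  rw [if_neg (by omega), if_neg (by omega)]
  rw [nu_add (by rw [tII0_m]; exact NN_monomial _)
      (NN_sum _ _ fun k _ => NN_sum _ _ fun l _ => by rw [tII4_m]; exact NN_monomial _),
    nu_sum m _ _ (fun k _ => NN_sum _ _ fun l _ => by rw [tII4_m]; exact NN_monomial _)]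
  have h2 : ∀ k : ℕ, nu m (∑ l ∈ range (2*n-a-b),
      pX n 1 * pX n (n-a+2) * pX n (2*n-a-b+1) *
        (Dp n (n-a-k+1) * Dp n (n-a-k+2) * (Dp n (2*n-a-b-l) * Dp n (2*n-a-b-l+1))))
      = (range (2*n-a-b)).inf fun l => nu m (pX n 1 * pX n (n-a+2) * pX n (2*n-a-b+1) *
        (Dp n (n-a-k+1) * Dp n (n-a-k+2) * (Dp n (2*n-a-b-l) * Dp n (2*n-a-b-l+1)))) :=
    fun k => nu_sum m _ _ (fun l _ => by rw [tII4_m]; exact NN_monomial _)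
  simp only [h2]
  have hval0 : nu m (pX n 1 * pX n (n-a+2) * pX n (2*n-a-b+1) * (Dp n 1 * Dp n 1) * Pp n ^ 2)
      = (((if 1 = m then 1 else 0) + (if n-a+2 = m then 1 else 0)
        + (if 2*n-a-b+1 = m then 1 else 0)
        + ((if 1 = m then 0 else 1) + (if 1 = m then 0 else 1)) + 2 : ℕ) : ℕ∞) := by
    rw [tII0_m, nu_monomial]
    simp only [Finsupp.add_apply, Finsupp.smul_apply, eX_apply hm1 hm2, eD_apply hm1 hm2,
      eP_apply hm1 hm2, smul_eq_mul, mul_one]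
  have hval : ∀ k l : ℕ, nu m (pX n 1 * pX n (n-a+2) * pX n (2*n-a-b+1) *
        (Dp n (n-a-k+1) * Dp n (n-a-k+2) * (Dp n (2*n-a-b-l) * Dp n (2*n-a-b-l+1))))
      = (((if 1 = m then 1 else 0) + (if n-a+2 = m then 1 else 0)
        + (if 2*n-a-b+1 = m then 1 else 0)
        + ((if n-a-k+1 = m then 0 else 1) + (if n-a-k+2 = m then 0 else 1)
          + ((if 2*n-a-b-l = m then 0 else 1) + (if 2*n-a-b-l+1 = m then 0 else 1))) : ℕ) : ℕ∞) := by
    intro k l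
    rw [tII4_m, nu_monomial]
    simp only [Finsupp.add_apply, eX_apply hm1 hm2, eD_apply hm1 hm2]
  rw [hval0]
  simp only [hval]
  apply le_antisymm
  · by_cases h1 : m = 1
    · exact le_trans inf_le_left (Nat.cast_le.mpr (by split_ifs <;> omega))
    · by_cases hc2 : m ≤ n-a+1
      · refine le_trans inf_le_right (le_trans (Finset.inf_le (show n-a+1-m ∈ range (n-a+1) by
          rw [Finset.mem_range]; omega)) (le_trans (Finset.inf_le (show 2*n-a-b-m ∈
          range (2*n-a-b) by rw [Finset.mem_range]; omega)) ?_))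
        exact Nat.cast_le.mpr (by split_ifs <;> omega)
      · by_cases hc3 : m = n-a+2 ∧ b = n-1
        · refine le_trans inf_le_right (le_trans (Finset.inf_le (show 0 ∈ range (n-a+1) by
            rw [Finset.mem_range]; omega)) (le_trans (Finset.inf_le (show 0 ∈
            range (2*n-a-b) by rw [Finset.mem_range]; omega)) ?_))
          exact Nat.cast_le.mpr (by rcases hc3 with ⟨u1, u2⟩; split_ifs <;> omega)
        · by_cases hc4 : m ≤ 2*n-a-b
          · refine le_trans inf_le_right (le_trans (Finset.inf_le (show 0 ∈ range (n-a+1) by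
              rw [Finset.mem_range]; omega)) (le_trans (Finset.inf_le (show 2*n-a-b-m ∈
              range (2*n-a-b) by rw [Finset.mem_range]; omega)) ?_))
            exact Nat.cast_le.mpr (by split_ifs <;> omega)
          · refine le_trans inf_le_right (le_trans (Finset.inf_le (show 0 ∈ range (n-a+1) by
              rw [Finset.mem_range]; omega)) (le_trans (Finset.inf_le (show 0 ∈
              range (2*n-a-b) by rw [Finset.mem_range]; omega)) ?_))
            exact Nat.cast_le.mpr (by split_ifs <;> omega)
  · refine le_inf (Nat.cast_le.mpr (by split_ifs <;> omega))
      (Finset.le_inf fun k hk => Finset.le_inf fun l hl => ?_)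
    have hk' := Finset.mem_range.mp hk
    have hl' := Finset.mem_range.mp hl
    exact Nat.cast_le.mpr (by split_ifs <;> omega)

end ClusterAux

open ClusterAux

/-- The map (a,b) ↦ X_{(a,b)} is injective on the set of indecomposable rigid objects
{(a,b) : 1 ≤ a ≤ n, 1 ≤ b ≤ n-1} of the cluster tube C_n. -/
theorem clusterMap_injective (n : ℕ) (hn : 2 ≤ n) :
    ∀ a b a' b' : ℕ, 1 ≤ a → a ≤ n → 1 ≤ b → b ≤ n - 1 →
      1 ≤ a' → a' ≤ n → 1 ≤ b' → b' ≤ n - 1 →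
      (a, b) ≠ (a', b') → Xab n a b ≠ Xab n a' b' := by
  intro a b a' b' ha1 ha2 hb1 hb2 ha1' ha2' hb1' hb2' hne hX
  apply hne
  have hP : Pm n a b = Pm n a' b' := by
    have h2 : Xab n a b * algebraMap (MvPolynomial ℕ ℚ) RF (Pp n ^ 4)
        = Xab n a' b' * algebraMap (MvPolynomial ℕ ℚ) RF (Pp n ^ 4) := by rw [hX]
    rw [clear, clear] at h2
    exact IsFractionRing.injective (MvPolynomial ℕ ℚ) RF h2
  have hnu : ∀ m, nu m (Pm n a b) = nu m (Pm n a' b') := fun m => by rw [hP]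
  by_cases e1 : a = 1 <;> by_cases e1' : a' = 1
  · -- O vs O
    subst e1; subst e1'
    have h := hnu (n - b)
    rw [nuO n b (n-b) (by omega) (by omega), nuO n b' (n-b) (by omega) (by omega)] at h
    have h' : (if n - b = n - b then 5 else 4 : ℕ)
        = (if n - b' = n - b then 5 else 4 : ℕ) := by exact_mod_cast h
    have hbb : b = b' := by split_ifs at h' <;> omega
    rw [hbb]
  · -- a = 1, a' ≠ 1
    exfalso
    subst e1
    by_cases e2' : a' + b' ≤ n
    · have h := hnu (n - a' + 1)
      rw [nuO n b (n-a'+1) (by omega) (by omega),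
        nuI n a' b' (n-a'+1) (by omega) (by omega) (by omega) e2' hb1'] at h
      have h' : (if n - b = n - a' + 1 then 5 else 4 : ℕ)
          = (if n-a'-b'+2 ≤ n-a'+1 ∧ n-a'+1 ≤ n-a'+1 then 3 else 4 : ℕ) := by exact_mod_cast h
      split_ifs at h' <;> omega
    · have h := hnu 1
      rw [nuO n b 1 (by omega) (by omega),
        nuII n a' b' 1 (by omega) (by omega) (by omega) ha2' (by omega) hb2' hn] at h
      have h' : (if n - b = 1 then 5 else 4 : ℕ)
          = (if (1:ℕ) = 1 then 3 else if 1 ≤ n-a'+1 then 2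
              else if (1:ℕ) = n-a'+2 ∧ b' = n-1 then 4 else if 1 ≤ 2*n-a'-b' then 3 else 4 : ℕ) := by
        exact_mod_cast h
      split_ifs at h' <;> omega
  · -- a ≠ 1, a' = 1
    exfalso
    subst e1'
    by_cases e2 : a + b ≤ n
    · have h := hnu (n - a + 1)
      rw [nuI n a b (n-a+1) (by omega) (by omega) (by omega) e2 hb1,
        nuO n b' (n-a+1) (by omega) (by omega)] at h
      have h' : (if n-a-b+2 ≤ n-a+1 ∧ n-a+1 ≤ n-a+1 then 3 else 4 : ℕ)
          = (if n - b' = n - a + 1 then 5 else 4 : ℕ) := by exact_mod_cast h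
      split_ifs at h' <;> omega
    · have h := hnu 1
      rw [nuII n a b 1 (by omega) (by omega) (by omega) ha2 (by omega) hb2 hn,
        nuO n b' 1 (by omega) (by omega)] at h
      have h' : (if (1:ℕ) = 1 then 3 else if 1 ≤ n-a+1 then 2
              else if (1:ℕ) = n-a+2 ∧ b = n-1 then 4 else if 1 ≤ 2*n-a-b then 3 else 4 : ℕ)
          = (if n - b' = 1 then 5 else 4 : ℕ) := by exact_mod_cast h
      split_ifs at h' <;> omega
  · -- both ≠ 1
    by_cases e2 : a + b ≤ n <;> by_cases e2' : a' + b' ≤ n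
    · -- I vs I
      have key : ∀ m, 1 ≤ m → m ≤ n - 1 →
          ((n-a-b+2 ≤ m ∧ m ≤ n-a+1) ↔ (n-a'-b'+2 ≤ m ∧ m ≤ n-a'+1)) := by
        intro m hm1 hm2
        have h := hnu m
        rw [nuI n a b m hm1 hm2 (by omega) e2 hb1,
          nuI n a' b' m hm1 hm2 (by omega) e2' hb1'] at h
        have h' : (if n-a-b+2 ≤ m ∧ m ≤ n-a+1 then 3 else 4 : ℕ)
            = (if n-a'-b'+2 ≤ m ∧ m ≤ n-a'+1 then 3 else 4 : ℕ) := by exact_mod_cast h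
        split_ifs at h' with c1 c2 <;> first | tauto | omega
      have k1 := (key (n-a+1) (by omega) (by omega)).mp ⟨by omega, by omega⟩
      have k2 := (key (n-a'+1) (by omega) (by omega)).mpr ⟨by omega, by omega⟩
      have haa : a = a' := by omega
      have k3 := (key (n-a-b+2) (by omega) (by omega)).mp ⟨by omega, by omega⟩
      have k4 := (key (n-a'-b'+2) (by omega) (by omega)).mpr ⟨by omega, by omega⟩
      have hbb : b = b' := by omega
      rw [haa, hbb]
    · -- I vs II
      exfalso
      have h := hnu 1
      rw [nuI n a b 1 (by omega) (by omega) (by omega) e2 hb1,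
        nuII n a' b' 1 (by omega) (by omega) (by omega) ha2' (by omega) hb2' hn] at h
      have h' : (if n-a-b+2 ≤ 1 ∧ 1 ≤ n-a+1 then 3 else 4 : ℕ)
          = (if (1:ℕ) = 1 then 3 else if 1 ≤ n-a'+1 then 2
              else if (1:ℕ) = n-a'+2 ∧ b' = n-1 then 4 else if 1 ≤ 2*n-a'-b' then 3 else 4 : ℕ) := by
        exact_mod_cast h
      split_ifs at h' <;> omega
    · -- II vs I
      exfalso
      have h := hnu 1
      rw [nuII n a b 1 (by omega) (by omega) (by omega) ha2 (by omega) hb2 hn,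
        nuI n a' b' 1 (by omega) (by omega) (by omega) e2' hb1'] at h
      have h' : (if (1:ℕ) = 1 then 3 else if 1 ≤ n-a+1 then 2
              else if (1:ℕ) = n-a+2 ∧ b = n-1 then 4 else if 1 ≤ 2*n-a-b then 3 else 4 : ℕ)
          = (if n-a'-b'+2 ≤ 1 ∧ 1 ≤ n-a'+1 then 3 else 4 : ℕ) := by exact_mod_cast h
      split_ifs at h' <;> omega
    · -- II vs II
      have key : ∀ m, 1 ≤ m → m ≤ n - 1 →
          (if m = 1 then 3 else if m ≤ n-a+1 then 2
            else if m = n-a+2 ∧ b = n-1 then 4 else if m ≤ 2*n-a-b then 3 else 4 : ℕ)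
          = (if m = 1 then 3 else if m ≤ n-a'+1 then 2
            else if m = n-a'+2 ∧ b' = n-1 then 4 else if m ≤ 2*n-a'-b' then 3 else 4 : ℕ) := by
        intro m hm1 hm2
        have h := hnu m
        rw [nuII n a b m hm1 hm2 (by omega) ha2 (by omega) hb2 hn,
          nuII n a' b' m hm1 hm2 (by omega) ha2' (by omega) hb2' hn] at h
        exact_mod_cast h
      have haa : a = a' := by
        by_contra hne2
        rcases Nat.lt_or_ge a a' with hlt | hge
        · have h := key (n-a+1) (by omega) (by omega)
          split_ifs at h <;> omega
        · have h := key (n-a'+1) (by omega) (by omega)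
          split_ifs at h <;> omega
      have hbb : b = b' := by
        by_contra hne2
        rcases Nat.lt_or_ge b' b with hlt | hge
        · have h := key (2*n-a-b') (by omega) (by omega)
          split_ifs at h <;> omega
        · have h := key (2*n-a-b) (by omega) (by omega)
          split_ifs at h <;> omega
      rw [haa, hbb]
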